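/- arXiv:2502.12090 — 2 statements merged into one kernel-verified Lean document; each statement's English description precedes it below -/
import Mathlib

section
/- Let p ≡ 5 (mod 8) be a prime, let g be a primitive element of F_p, let C_0^(4) be the subgroup of F_p^* of index 4, and let D = C_0^(4) ∪ gC_0^(4). For a ∈ F_p^*, let M_a = {(x, y) ∈ D × D : x - y = a}. Then the function a ↦ |M_a| is constant on C_0^(2) = C_0^(4) ∪ g²C_0^(4) (the set of nonzero squares of F_p), and constant on C_1^(2) = gC_0^(2) (the set of non-squares). Moreover |M_a| = |M_{-a}| for every a ∈ F_p^*. -/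
open scoped Classical

/-- `cycC4 g i` is the coset `g^i C_0^{(4)}` of the index-4 subgroup `C_0^{(4)}`
of the cyclic group generated by the primitive element `g`. -/
def cycC4 {F : Type*} [Monoid F] (g : F) (i : ℕ) : Set F :=
  {x | ∃ k : ℕ, x = g ^ (4 * k + i)}

/-- `cycC2 g i` is the coset `g^i C_0^{(2)}` of the index-2 subgroup `C_0^{(2)}`
of the cyclic group generated by the primitive element `g`, as a finset. -/
noncomputable def cycC2 {F : Type*} [Monoid F] [Fintype F] (g : F) (i : ℕ) : Finset F :=
  Finset.univ.filter (fun x => ∃ k : ℕ, x = g ^ (2 * k + i))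

/-- `D = C_0^{(4)} ∪ g C_0^{(4)}` as a finset. -/
noncomputable def cycD {F : Type*} [Monoid F] [Fintype F] (g : F) : Finset F :=
  Finset.univ.filter (fun x => x ∈ cycC4 g 0 ∪ cycC4 g 1)

/-- The number of solutions `(x, y) ∈ D × D` of the equation `x - y = a`. -/
noncomputable def diffCount {G : Type*} [AddCommGroup G] (D : Finset G) (a : G) : ℕ :=
  ((D ×ˢ D).filter (fun p => p.1 - p.2 = a)).card

/-- `S_D`: the set of nonzero `a` for which `x - y = a` has exactly `lam`
solutions `(x, y) ∈ D × D`. -/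
noncomputable def SDset {F : Type*} [Field F] [Fintype F] (D : Finset F) (lam : ℕ) : Finset F :=
  Finset.univ.filter (fun a => a ≠ 0 ∧ diffCount D a = lam)

lemma diffCount_neg' {G : Type*} [AddCommGroup G] (D : Finset G) (a : G) :
    diffCount D (-a) = diffCount D a := by
  unfold diffCount
  refine Finset.card_bij' (fun q _ => (q.2, q.1)) (fun q _ => (q.2, q.1)) ?_ ?_ ?_ ?_
  · rintro ⟨x, y⟩ hq
    simp only [Finset.mem_filter, Finset.mem_product] at hq ⊢
    exact ⟨⟨hq.1.2, hq.1.1⟩, by rw [← neg_neg a, ← hq.2, neg_sub]⟩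
  · rintro ⟨x, y⟩ hq
    simp only [Finset.mem_filter, Finset.mem_product] at hq ⊢
    exact ⟨⟨hq.1.2, hq.1.1⟩, by rw [← hq.2, neg_sub]⟩
  · intro q hq; rfl
  · intro q hq; rfl

lemma diffCount_mul' {F : Type*} [Field F] (D : Finset F) (u a : F) (hu : u ≠ 0)
    (hD : ∀ x ∈ D, u * x ∈ D) (hD' : ∀ x ∈ D, u⁻¹ * x ∈ D) :
    diffCount D (u * a) = diffCount D a := by
  unfold diffCount
  refine Finset.card_bij' (fun q _ => (u⁻¹ * q.1, u⁻¹ * q.2)) (fun q _ => (u * q.1, u * q.2)) ?_ ?_ ?_ ?_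
  · rintro ⟨x, y⟩ hq
    simp only [Finset.mem_filter, Finset.mem_product] at hq ⊢
    refine ⟨⟨hD' _ hq.1.1, hD' _ hq.1.2⟩, ?_⟩
    have h2 := hq.2
    field_simp
    linear_combination h2
  · rintro ⟨x, y⟩ hq
    simp only [Finset.mem_filter, Finset.mem_product] at hq ⊢
    refine ⟨⟨hD _ hq.1.1, hD _ hq.1.2⟩, ?_⟩
    have h2 := hq.2
    linear_combination u * h2
  · rintro ⟨x, y⟩ hq; simp [hu, mul_assoc, mul_inv_cancel_left₀]
  · rintro ⟨x, y⟩ hq; simp [hu, mul_assoc, inv_mul_cancel_left₀]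

lemma memD_mul {F : Type*} [Field F] [Fintype F] (g : F) (k : ℕ) :
    ∀ x ∈ cycD g, g ^ (4 * k) * x ∈ cycD g := by
  intro x hx
  simp only [cycD, Finset.mem_filter, Finset.mem_univ, true_and, Set.mem_union, cycC4,
    Set.mem_setOf_eq] at hx ⊢
  rcases hx with ⟨m, rfl⟩ | ⟨m, rfl⟩
  · exact Or.inl ⟨k + m, by rw [← pow_add]; ring_nf⟩
  · exact Or.inr ⟨k + m, by rw [← pow_add]; ring_nf⟩

theorem diffCount_const_on_squares_and_nonsquares
    (p : ℕ) (hp : p.Prime) (hp5 : p % 8 = 5)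
    (F : Type) [Field F] [Fintype F] (hF : Fintype.card F = p)
    (g : F) (hg : orderOf g = p - 1) :
    (∀ a ∈ cycC2 g 0, ∀ b ∈ cycC2 g 0, diffCount (cycD g) a = diffCount (cycD g) b) ∧
    (∀ a ∈ cycC2 g 1, ∀ b ∈ cycC2 g 1, diffCount (cycD g) a = diffCount (cycD g) b) ∧
    (∀ a : F, a ≠ 0 → diffCount (cycD g) a = diffCount (cycD g) (-a)) := by
  set n := p - 1 with hn
  have hp5' : 5 ≤ p := by omega
  have hn8 : n % 8 = 4 := by omega
  obtain ⟨n', hn'⟩ : ∃ n', n = n' + 1 := ⟨n - 1, by omega⟩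
  have hgn : g ^ n = 1 := by rw [← hg]; exact pow_orderOf_eq_one g
  have hgne : g ≠ 0 := by
    intro h
    rw [h, zero_pow (by omega : n ≠ 0)] at hgn
    exact zero_ne_one hgn
  have hneg : g ^ (n / 2) = -1 := by
    have hsq : g ^ (n / 2) * g ^ (n / 2) = 1 := by
      rw [← pow_add]
      have : n / 2 + n / 2 = n := by omega
      rw [this, hgn]
    have hne1 : g ^ (n / 2) ≠ 1 := by
      intro h
      have hd := orderOf_dvd_of_pow_eq_one h
      rw [hg] at hd
      have := Nat.le_of_dvd (by omega) hd
      omega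
    rcases mul_self_eq_one_iff.mp hsq with h | h
    · exact absurd h hne1
    · exact h
  -- key: for a = g^(2m+i), b = g^(2l+i), diffCount equal
  have main : ∀ e : ℕ, e % 4 = 0 → ∀ c : F,
      diffCount (cycD g) (g ^ e * c) = diffCount (cycD g) c := by
    intro e he c
    obtain ⟨k, rfl⟩ : ∃ k, e = 4 * k := ⟨e / 4, by omega⟩
    have hone : g ^ (4 * k) * g ^ (4 * (k * n')) = 1 := by
      rw [← pow_add]
      have : 4 * k + 4 * (k * n') = n * (4 * k) := by rw [hn']; ring
      rw [this, pow_mul, hgn, one_pow]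
    have hinv : (g ^ (4 * k))⁻¹ = g ^ (4 * (k * n')) := inv_eq_of_mul_eq_one_right hone
    apply diffCount_mul'
    · exact pow_ne_zero _ hgne
    · exact memD_mul g k
    · intro x hx; rw [hinv]; exact memD_mul g _ x hx
  have key : ∀ i m l : ℕ,
      diffCount (cycD g) (g ^ (2 * m + i)) = diffCount (cycD g) (g ^ (2 * l + i)) := by
    intro i m l
    set a := g ^ (2 * m + i) with ha
    set b := g ^ (2 * l + i) with hb
    obtain ⟨q, hq⟩ : ∃ q, q = l + m * n' := ⟨_, rfl⟩
    have hEa : g ^ (2 * q) * a = b := by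
      rw [ha, hb, ← pow_add]
      have : 2 * q + (2 * m + i) = (2 * l + i) + n * (2 * m) := by rw [hq, hn']; ring
      rw [this, pow_add, pow_mul, hgn, one_pow, mul_one]
    rcases Nat.even_or_odd q with ⟨t, ht⟩ | ⟨t, ht⟩
    · rw [← hEa, main (2 * q) (by omega) a]
    · have h2 : (2 * q + n / 2) % 4 = 0 := by omega
      have hneg2 : g ^ (2 * q + n / 2) * a = -b := by
        rw [pow_add, mul_comm (g ^ (2 * q)), mul_assoc, hEa, hneg, neg_one_mul]
      calc diffCount (cycD g) a = diffCount (cycD g) (g ^ (2 * q + n / 2) * a) :=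
            (main _ h2 a).symm
        _ = diffCount (cycD g) (-b) := by rw [hneg2]
        _ = diffCount (cycD g) b := diffCount_neg' _ _
  refine ⟨?_, ?_, fun a _ => (diffCount_neg' _ a).symm⟩
  · intro a ha b hb
    simp only [cycC2, Finset.mem_filter, Finset.mem_univ, true_and] at ha hb
    obtain ⟨m, rfl⟩ := ha; obtain ⟨l, rfl⟩ := hb
    exact key 0 m l
  · intro a ha b hb
    simp only [cycC2, Finset.mem_filter, Finset.mem_univ, true_and] at ha hb
    obtain ⟨m, rfl⟩ := ha; obtain ⟨l, rfl⟩ := hb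
    exact key 1 m l
end

section
/- Let p ≡ 5 (mod 8) be a prime, let g be a primitive element of F_p, let C_0^(4) be the subgroup of F_p^* of index 4, and let CT_p be the cyclotomic tournament with vertex set F_p and an arc from x to y if and only if x - y ∈ C_0^(4) ∪ gC_0^(4). Then the automorphism group of CT_p acting on the set of arcs of CT_p has exactly two orbits, namely {(x, y) : x - y ∈ C_0^(4)} and {(x, y) : x - y ∈ gC_0^(4)}. -/
open Finset

section CayleyDigraph

variable {G : Type*} [AddCommGroup G] [Fintype G] (D : Set G)

def IsCayleyAutomorphism (σ : Equiv.Perm G) : Prop :=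
  ∀ x y, x - y ∈ D ↔ σ x - σ y ∈ D

open Classical in
noncomputable def commonOutDegree (x y : G) : ℕ :=
  #{u | x - u ∈ D ∧ y - u ∈ D}

variable {D}

theorem IsCayleyAutomorphism.commonOutDegree_apply {σ : Equiv.Perm G}
    (hσ : IsCayleyAutomorphism D σ) (x y : G) :
    commonOutDegree D (σ x) (σ y) = commonOutDegree D x y :=
  (card_equiv σ fun u => by simp [hσ x u, hσ y u]).symm

variable (D)

theorem commonOutDegree_comm (x y : G) : commonOutDegree D x y = commonOutDegree D y x :=
  card_equiv (Equiv.refl G) fun u => by simp [and_comm]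

theorem commonOutDegree_eq_sub (x y : G) :
    commonOutDegree D x y = commonOutDegree D (x - y) 0 := by
  have hσ : IsCayleyAutomorphism D (Equiv.subRight y) := fun a b => by simp
  simpa using (hσ.commonOutDegree_apply x y).symm

theorem commonOutDegree_neg (c : G) :
    commonOutDegree D (-c) 0 = commonOutDegree D c 0 := by
  rw [commonOutDegree_comm, commonOutDegree_eq_sub, sub_neg_eq_add, zero_add]

open Classical in
theorem commonOutDegree_zero_zero : commonOutDegree D 0 0 = #{u | u ∈ D} :=
  card_equiv (Equiv.neg G) fun u => by simp

open Classical in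
theorem sum_commonOutDegree : ∑ c, commonOutDegree D c 0 = #{u | u ∈ D} ^ 2 := by
  calc ∑ c, commonOutDegree D c 0
      = ∑ u, ∑ c, if -u ∈ D ∧ c - u ∈ D then 1 else 0 := by
        simp only [commonOutDegree, card_filter, zero_sub, and_comm]
        exact sum_comm
    _ = ∑ u, if -u ∈ D then #{c | c ∈ D} else 0 := by
        refine sum_congr rfl fun u _ => ?_
        split_ifs with hu
        · simp only [hu, true_and, ← card_filter]
          exact card_equiv (Equiv.subRight u) fun c => by simp
        · simp [hu]
    _ = #{u | u ∈ D} ^ 2 := by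
        rw [← sum_filter, sum_const, smul_eq_mul, sq,
          card_equiv (Equiv.neg G) (t := {u | u ∈ D}) fun u => by simp]

end CayleyDigraph

theorem Function.Periodic.sum_range_mul {M : Type*} [AddCommMonoid M] {f : ℕ → M} {k : ℕ}
    (hf : Function.Periodic f k) (m : ℕ) :
    ∑ j ∈ range (m * k), f j = m • ∑ j ∈ range k, f j := by
  induction m with
  | zero => simp
  | succ m ih =>
    rw [add_mul, one_mul, sum_range_add, ih, succ_nsmul]
    congr 1
    exact sum_congr rfl fun j _ => by rw [add_comm]; simpa using hf.nat_mul m j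

section CyclotomicClasses

variable {M : Type*} [CommMonoid M] {g : M} {n : ℕ}

theorem IsPrimitiveRoot.pow_mem_cycC4_iff (hg : IsPrimitiveRoot g n) (hn : n ≠ 0)
    (h4 : 4 ∣ n) {i j : ℕ} (hi : i < 4) : g ^ j ∈ cycC4 g i ↔ j % 4 = i := by
  constructor
  · rintro ⟨k, hk⟩
    have hmod := (hg.isOfFinOrder hn).pow_eq_pow_iff_modEq.1 hk
    rw [← hg.eq_orderOf] at hmod
    have := hmod.of_dvd h4
    unfold Nat.ModEq at this
    omega
  · intro hj
    exact ⟨j / 4, by rw [← hj, Nat.div_add_mod]⟩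

theorem IsPrimitiveRoot.disjoint_cycC4 (hg : IsPrimitiveRoot g n) (hn : n ≠ 0) (h4 : 4 ∣ n)
    {i j : ℕ} (hi : i < 4) (hj : j < 4) (hij : i ≠ j) : Disjoint (cycC4 g i) (cycC4 g j) := by
  refine Set.disjoint_left.2 ?_
  rintro _ ⟨k, rfl⟩ h
  rw [hg.pow_mem_cycC4_iff hn h4 hj] at h
  omega

end CyclotomicClasses

section FiniteField

theorem ne_zero_of_card_eq_add_one {α : Type*} [Fintype α] [Nontrivial α] {n : ℕ}
    (h : Fintype.card α = n + 1) : n ≠ 0 := by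
  have := Fintype.one_lt_card (α := α)
  omega

variable {F : Type*} [Field F] [Fintype F] {g : F} {n : ℕ}

theorem IsPrimitiveRoot.exists_pow_eq_of_ne_zero (hg : IsPrimitiveRoot g n)
    (hF : Fintype.card F = n + 1) {x : F} (hx : x ≠ 0) : ∃ j < n, g ^ j = x := by
  have : NeZero n := ⟨ne_zero_of_card_eq_add_one hF⟩
  refine hg.eq_pow_of_pow_eq_one ?_
  rw [← FiniteField.pow_card_sub_one_eq_one x hx, hF, Nat.add_sub_cancel]

theorem IsPrimitiveRoot.sum_eq_add_sum_range_pow {M : Type*} [AddCommMonoid M]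
    (hg : IsPrimitiveRoot g n) (hF : Fintype.card F = n + 1) (φ : F → M) :
    ∑ c, φ c = φ 0 + ∑ j ∈ range n, φ (g ^ j) := by
  classical
  rw [Fintype.sum_eq_add_sum_compl 0]
  refine congrArg _ (sum_nbij (g ^ ·) ?_ ?_ ?_ fun _ _ => rfl).symm
  · intro j _
    simpa using pow_ne_zero j (hg.ne_zero (ne_zero_of_card_eq_add_one hF))
  · intro i hi j hj h
    exact hg.pow_inj (mem_range.1 hi) (mem_range.1 hj) h
  · intro x hx
    obtain ⟨j, hj, rfl⟩ := hg.exists_pow_eq_of_ne_zero hF (by simpa using hx)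
    exact ⟨j, mem_range.2 hj, rfl⟩

end FiniteField

def cycTournamentSet {M : Type*} [Monoid M] (g : M) : Set M := cycC4 g 0 ∪ cycC4 g 1

theorem zero_notMem_cycTournamentSet {M₀ : Type*} [MonoidWithZero M₀] [NoZeroDivisors M₀]
    {g : M₀} (hg : g ≠ 0) : 0 ∉ cycTournamentSet g := by
  rintro (⟨k, hk⟩ | ⟨k, hk⟩) <;> exact pow_ne_zero _ hg hk.symm

theorem IsPrimitiveRoot.pow_mem_cycTournamentSet_iff {M : Type*} [CommMonoid M] {g : M} {n : ℕ}
    (hg : IsPrimitiveRoot g n) (hn : n ≠ 0) (h4 : 4 ∣ n) {j : ℕ} :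
    g ^ j ∈ cycTournamentSet g ↔ j % 4 < 2 := by
  rw [cycTournamentSet, Set.mem_union, hg.pow_mem_cycC4_iff hn h4 (by norm_num),
    hg.pow_mem_cycC4_iff hn h4 (by norm_num)]
  omega

section CyclotomicTournament

variable {F : Type*} [Field F] [Fintype F] {g : F} {m : ℕ}

variable (hg : IsPrimitiveRoot g (4 * m)) (hF : Fintype.card F = 4 * m + 1)
include hg hF

theorem pow_four_mul_mem_cycTournamentSet_iff (k : ℕ) (z : F) :
    g ^ (4 * k) * z ∈ cycTournamentSet g ↔ z ∈ cycTournamentSet g := by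
  have hn := ne_zero_of_card_eq_add_one hF
  by_cases hz : z = 0
  · simp [hz]
  obtain ⟨j, -, rfl⟩ := hg.exists_pow_eq_of_ne_zero hF hz
  rw [← pow_add, hg.pow_mem_cycTournamentSet_iff hn (dvd_mul_right 4 m),
    hg.pow_mem_cycTournamentSet_iff hn (dvd_mul_right 4 m)]
  omega

theorem exists_isCayleyAutomorphism_affine (k : ℕ) (b : F) :
    ∃ σ : Equiv.Perm F, IsCayleyAutomorphism (cycTournamentSet g) σ ∧
      ∀ x, σ x = g ^ (4 * k) * x + b := by
  have hg0 : g ^ (4 * k) ≠ 0 := pow_ne_zero _ (hg.ne_zero (ne_zero_of_card_eq_add_one hF))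
  refine ⟨(Equiv.mulLeft₀ _ hg0).trans (Equiv.addRight b), fun x y => ?_, fun x => rfl⟩
  simp only [Equiv.trans_apply, Equiv.mulLeft₀_apply, Equiv.coe_addRight,
    add_sub_add_right_eq_sub, ← mul_sub, pow_four_mul_mem_cycTournamentSet_iff hg hF]

theorem commonOutDegree_pow_four_mul (k : ℕ) (c : F) :
    commonOutDegree (cycTournamentSet g) (g ^ (4 * k) * c) 0 =
      commonOutDegree (cycTournamentSet g) c 0 := by
  obtain ⟨σ, hσ, hσx⟩ := exists_isCayleyAutomorphism_affine hg hF k 0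
  simpa [hσx] using hσ.commonOutDegree_apply c 0

theorem periodic_commonOutDegree_pow (hm : Odd m) :
    Function.Periodic (fun j => commonOutDegree (cycTournamentSet g) (g ^ j) 0) 2 := by
  have hneg : g ^ (2 * m) = -1 := by
    have h2 := hg.pow_of_dvd (p := 2 * m) (by have := hm.pos; omega) ⟨2, by ring⟩
    rw [show 4 * m = 2 * (2 * m) by ring, Nat.mul_div_cancel _ (by have := hm.pos; omega)] at h2
    exact h2.eq_neg_one_of_two_right
  obtain ⟨r, rfl⟩ := hm
  intro j
  calc commonOutDegree (cycTournamentSet g) (g ^ (j + 2)) 0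
      = commonOutDegree (cycTournamentSet g) (g ^ (4 * (r + 1)) * g ^ j) 0 := by
        rw [← commonOutDegree_neg, ← neg_one_mul, ← hneg, ← pow_add, ← pow_add]
        ring_nf
    _ = commonOutDegree (cycTournamentSet g) (g ^ j) 0 :=
        commonOutDegree_pow_four_mul hg hF _ _

theorem commonOutDegree_of_mem_cycC4 (hm : Odd m) {i : ℕ} {c : F} (hc : c ∈ cycC4 g i) :
    commonOutDegree (cycTournamentSet g) c 0 =
      commonOutDegree (cycTournamentSet g) (g ^ (i % 2)) 0 := by
  obtain ⟨k, rfl⟩ := hc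
  rw [← (periodic_commonOutDegree_pow hg hF hm).map_mod_nat,
    show (4 * k + i) % 2 = i % 2 by omega]

open Classical in
theorem card_cycTournamentSet : #{u | u ∈ cycTournamentSet g} = 2 * m := by
  have hn := ne_zero_of_card_eq_add_one hF
  have hper : Function.Periodic (fun j : ℕ => if j % 4 < 2 then 1 else 0) 4 := fun j => by simp
  rw [card_filter, hg.sum_eq_add_sum_range_pow hF,
    if_neg (zero_notMem_cycTournamentSet (hg.ne_zero hn)), zero_add]
  simp only [hg.pow_mem_cycTournamentSet_iff hn (dvd_mul_right 4 m), mul_comm 4 m,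
    hper.sum_range_mul]
  simp only [sum_range_succ, sum_range_zero]
  norm_num [mul_comm]

theorem commonOutDegree_one_ne (hm : Odd m) :
    commonOutDegree (cycTournamentSet g) 1 0 ≠ commonOutDegree (cycTournamentSet g) g 0 := by
  have hsum := sum_commonOutDegree (cycTournamentSet g)
  rw [hg.sum_eq_add_sum_range_pow hF, commonOutDegree_zero_zero, card_cycTournamentSet hg hF,
    show 4 * m = 2 * m * 2 by ring, (periodic_commonOutDegree_pow hg hF hm).sum_range_mul] at hsum
  simp only [sum_range_succ, sum_range_zero, zero_add, pow_zero, pow_one, smul_eq_mul] at hsum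
  have hm0 := hm.pos
  have : 1 + commonOutDegree (cycTournamentSet g) 1 0 + commonOutDegree (cycTournamentSet g) g 0 =
      2 * m := by
    nlinarith
  omega

theorem IsCayleyAutomorphism.eq_of_mem_cycC4 (hm : Odd m) {σ : Equiv.Perm F}
    (hσ : IsCayleyAutomorphism (cycTournamentSet g) σ) {x y : F} {i j : ℕ}
    (hi : i < 2) (hj : j < 2) (hxy : x - y ∈ cycC4 g i) (hσxy : σ x - σ y ∈ cycC4 g j) :
    i = j := by
  have key := hσ.commonOutDegree_apply x y
  rw [commonOutDegree_eq_sub, commonOutDegree_eq_sub _ x,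
    commonOutDegree_of_mem_cycC4 hg hF hm hxy, commonOutDegree_of_mem_cycC4 hg hF hm hσxy] at key
  by_contra hij
  obtain ⟨rfl, rfl⟩ | ⟨rfl, rfl⟩ : i = 0 ∧ j = 1 ∨ i = 1 ∧ j = 0 := by omega
  · exact commonOutDegree_one_ne hg hF hm (by simpa using key.symm)
  · exact commonOutDegree_one_ne hg hF hm (by simpa using key)

theorem exists_isCayleyAutomorphism_of_mem_cycC4 {x y x' y' : F} {i : ℕ}
    (hxy : x - y ∈ cycC4 g i) (hxy' : x' - y' ∈ cycC4 g i) :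
    ∃ σ : Equiv.Perm F, IsCayleyAutomorphism (cycTournamentSet g) σ ∧ σ x = x' ∧ σ y = y' := by
  obtain ⟨k, hk⟩ := hxy
  obtain ⟨l, hl⟩ := hxy'
  have hm := ne_zero_of_card_eq_add_one hF
  -- chosen so that `4 * e + 4 * k ≡ 4 * l [MOD 4 * m]`
  set e := l + k * (4 * m - 1)
  obtain ⟨σ, hσ, hσx⟩ := exists_isCayleyAutomorphism_affine hg hF e (y' - g ^ (4 * e) * y)
  refine ⟨σ, hσ, ?_, by rw [hσx]; ring⟩
  have hexp : 4 * e + (4 * k + i) = 4 * l + i + 4 * m * (4 * k) := by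
    simp only [e]
    zify [(by omega : 1 ≤ 4 * m)]
    ring
  calc σ x = g ^ (4 * e) * (x - y) + y' := by rw [hσx]; ring
    _ = x' := by
      rw [hk, ← pow_add, hexp, pow_add, pow_mul, hg.pow_eq_one, one_pow, mul_one, ← hl,
        sub_add_cancel]

end CyclotomicTournament

theorem cyclotomic_tournament_two_arc_orbits_general
    (p : ℕ) (hp5 : p % 8 = 5)
    (F : Type) [Field F] [Fintype F] (hF : Fintype.card F = p)
    (g : F) (hg : orderOf g = p - 1) :
    let D : Set F := cycC4 g 0 ∪ cycC4 g 1
    let Aut : Set (Equiv.Perm F) :=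
      {σ | ∀ x y : F, (x - y ∈ D) ↔ (σ x - σ y ∈ D)}
    let O₀ : Set (F × F) := {z | z.1 - z.2 ∈ cycC4 g 0}
    let O₁ : Set (F × F) := {z | z.1 - z.2 ∈ cycC4 g 1}
    O₀.Nonempty ∧ O₁.Nonempty ∧ O₀ ∩ O₁ = ∅ ∧
    O₀ ∪ O₁ = {z : F × F | z.1 - z.2 ∈ D} ∧
    ∀ z w : F × F, z ∈ O₀ ∪ O₁ → w ∈ O₀ ∪ O₁ →
      ((∃ σ ∈ Aut, (σ z.1, σ z.2) = w) ↔
        ((z ∈ O₀ ∧ w ∈ O₀) ∨ (z ∈ O₁ ∧ w ∈ O₁))) := by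
  intro D Aut O₀ O₁
  obtain ⟨m, rfl⟩ : ∃ m, p = 4 * m + 1 := ⟨p / 4, by omega⟩
  have hm : Odd m := ⟨m / 2, by omega⟩
  have hprim : IsPrimitiveRoot g (4 * m) := by simpa [hg] using IsPrimitiveRoot.orderOf g
  have hdisj := hprim.disjoint_cycC4 (by omega) (dvd_mul_right 4 m) (i := 0) (j := 1)
    (by norm_num) (by norm_num) (by norm_num)
  refine ⟨⟨(1, 0), 0, by simp⟩, ⟨(g, 0), 0, by simp⟩,
    Set.eq_empty_of_forall_notMem fun z hz => hdisj.notMem_of_mem_left hz.1 hz.2, rfl, ?_⟩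
  rintro ⟨x, y⟩ w hz hw
  constructor
  · rintro ⟨σ, hσ, rfl⟩
    rcases hz with hz | hz <;> rcases hw with hw | hw
    · exact Or.inl ⟨hz, hw⟩
    · exact absurd (IsCayleyAutomorphism.eq_of_mem_cycC4 hprim hF hm hσ two_pos one_lt_two hz hw)
        zero_ne_one
    · exact absurd (IsCayleyAutomorphism.eq_of_mem_cycC4 hprim hF hm hσ one_lt_two two_pos hz hw)
        one_ne_zero
    · exact Or.inr ⟨hz, hw⟩
  · rintro (⟨hz, hw⟩ | ⟨hz, hw⟩) <;>
    · obtain ⟨σ, hσ, hσx, hσy⟩ := exists_isCayleyAutomorphism_of_mem_cycC4 hprim hF hz hw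
      exact ⟨σ, hσ, by rw [hσx, hσy]⟩

theorem cyclotomic_tournament_two_arc_orbits
    (p : ℕ) (hp : p.Prime) (hp5 : p % 8 = 5)
    (F : Type) [Field F] [Fintype F] (hF : Fintype.card F = p)
    (g : F) (hg : orderOf g = p - 1) :
    let D : Set F := cycC4 g 0 ∪ cycC4 g 1
    let Aut : Set (Equiv.Perm F) :=
      {σ | ∀ x y : F, (x - y ∈ D) ↔ (σ x - σ y ∈ D)}
    let O₀ : Set (F × F) := {z | z.1 - z.2 ∈ cycC4 g 0}
    let O₁ : Set (F × F) := {z | z.1 - z.2 ∈ cycC4 g 1}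
    O₀.Nonempty ∧ O₁.Nonempty ∧ O₀ ∩ O₁ = ∅ ∧
    O₀ ∪ O₁ = {z : F × F | z.1 - z.2 ∈ D} ∧
    ∀ z w : F × F, z ∈ O₀ ∪ O₁ → w ∈ O₀ ∪ O₁ →
      ((∃ σ ∈ Aut, (σ z.1, σ z.2) = w) ↔
        ((z ∈ O₀ ∧ w ∈ O₀) ∨ (z ∈ O₁ ∧ w ∈ O₁))) :=
  cyclotomic_tournament_two_arc_orbits_general p hp5 F hF g hg
end
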